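/- arXiv:1707.07097 — 4 statements merged into one kernel-verified Lean document; each statement's English description precedes it below -/
import Mathlib

section
/- For any concave, non-decreasing function s : ℝ₊ → ℝ₊ with s(1) = 1 and s(k) = k for k ≤ 1, the function i ↦ i · s(n/i) is strictly increasing in i for 0 < i < n, and is constant (equal to n) for i ≥ n. -/
open Set

/- Concavity through the point `(1, 1)` makes the secant slope `(s k - 1) / (k - 1)` antitone, and
sublinearity keeps it below `1`; together they force the ratio `s k / k` to decrease strictly for
`k > 1`. Since `i * s (n / i) = n * (s k / k)` with `k = n / i`, and `k` decreases as `i` grows,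
the function increases strictly on `(0, n)`; for `i ≥ n` we have `n / i ≤ 1`, where `s` is the
identity. -/

theorem ConcaveOn.strictAntiOn_apply_div_self {s : ℝ → ℝ} (hs : ConcaveOn ℝ (Ici 1) s)
    (hs1 : s 1 = 1) (hsub : ∀ k : ℝ, 1 < k → s k < k) :
    StrictAntiOn (fun k => s k / k) (Ioi 1) := by
  intro y (hy : 1 < y) x (hx : 1 < x) hyx
  have hslope : (s x - 1) * (y - 1) ≤ (s y - 1) * (x - 1) := by
    have h := hs.neg.secant_mono (a := 1) self_mem_Ici hy.le hx.le hy.ne' hx.ne' hyx.le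
    simp only [Pi.neg_apply, hs1] at h
    rw [div_le_div_iff₀ (by linarith) (by linarith)] at h
    linarith
  have hgap : (x - y) * (x - s x) ≤ (x - 1) * (x * s y - y * s x) := by
    nlinarith [mul_le_mul_of_nonneg_left hslope (by linarith : (0 : ℝ) ≤ x)]
  have hpos : 0 < x * s y - y * s x := by
    nlinarith [mul_pos (sub_pos.2 hyx) (sub_pos.2 (hsub x hx))]
  show s x / x < s y / y
  rw [div_lt_div_iff₀ (by linarith) (by linarith)]
  linarith

theorem stmt0_general (n : ℝ) (hn : 0 < n) (s : ℝ → ℝ)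
    (hconc : ConcaveOn ℝ (Set.Ici (0:ℝ)) s)
    (hlow : ∀ k : ℝ, 0 ≤ k → k ≤ 1 → s k = k)
    (hsub : ∀ k : ℝ, 1 < k → s k < k) :
    StrictMonoOn (fun i : ℝ => i * s (n / i)) (Set.Ioo 0 n) ∧
      ∀ i : ℝ, n ≤ i → i * s (n / i) = n := by
  refine ⟨fun a ⟨ha0, han⟩ b ⟨hb0, hbn⟩ hab => ?_, fun i hi => ?_⟩
  · have hconc₁ := hconc.subset (Ici_subset_Ici.2 zero_le_one) (convex_Ici 1)
    have hratio := hconc₁.strictAntiOn_apply_div_self (hlow 1 zero_le_one le_rfl) hsub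
      ((one_lt_div hb0).2 hbn) ((one_lt_div ha0).2 han) (div_lt_div_of_pos_left hn ha0 hab)
    have hrewrite : ∀ i, 0 < i → i * s (n / i) = n * (s (n / i) / (n / i)) := fun i hi => by
      field_simp
    simp only [hrewrite a ha0, hrewrite b hb0]
    exact mul_lt_mul_of_pos_left hratio hn
  · have hi0 : 0 < i := hn.trans_le hi
    rw [hlow _ (by positivity) ((div_le_one hi0).2 hi)]
    field_simp

/-- For a concave, non-decreasing speedup function `s` with `s k = k` for `k ≤ 1`
(so in particular `s 1 = 1`) and `s k < k` for `k > 1`, the function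
`i ↦ i * s (n / i)` is strictly increasing on `(0, n)` and constantly `n` on `[n, ∞)`. -/
theorem stmt0 (n : ℝ) (hn : 0 < n) (s : ℝ → ℝ)
    (hconc : ConcaveOn ℝ (Set.Ici (0:ℝ)) s)
    (hmono : MonotoneOn s (Set.Ici (0:ℝ)))
    (hlow : ∀ k : ℝ, 0 ≤ k → k ≤ 1 → s k = k)
    (hsub : ∀ k : ℝ, 1 < k → s k < k) :
    StrictMonoOn (fun i : ℝ => i * s (n / i)) (Set.Ioo 0 n) ∧
      ∀ i : ℝ, n ≤ i → i * s (n / i) = n :=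
  stmt0_general n hn s hconc hlow hsub
end

section
/- In a birth-death Markov chain on ℕ with constant arrival rate Λ and departure rate μ_low for states 1 ≤ i ≤ t and μ_high for states i > t, where ρ_low = Λ/μ_low > 1 > ρ_high = Λ/μ_high, the chain is positive recurrent and the mean number in system satisfies E[N] = t + ρ_low/(1−ρ_low) + 1/(1−ρ_high) + (1 + t − t·ρ_high)/(ρ_high − 1 + ρ_low^t·(ρ_low − ρ_high)). -/
/-- Unnormalized stationary weights of the threshold birth-death chain:
`ρ_low^i` for `i ≤ t` and `ρ_low^t ρ_high^(i-t)` for `i > t`. -/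
noncomputable def threshWeight (ρlow ρhigh : ℝ) (t : ℕ) (i : ℕ) : ℝ :=
  if i ≤ t then ρlow ^ i else ρlow ^ t * ρhigh ^ (i - t)

lemma sum_i_pow (x : ℝ) (hx : x ≠ 1) (t : ℕ) :
    ∑ i ∈ Finset.range (t + 1), (i : ℝ) * x ^ i
      = ((t : ℝ) * x ^ (t + 2) - ((t : ℝ) + 1) * x ^ (t + 1) + x) / (x - 1) ^ 2 := by
  have hx1 : x - 1 ≠ 0 := sub_ne_zero.mpr hx
  induction t with
  | zero => simp
  | succ n ih =>
    rw [Finset.sum_range_succ, ih]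
    push_cast
    field_simp
    ring

set_option maxHeartbeats 2000000 in
lemma key_identity (rl rh a T : ℝ) (hl0 : rl - 1 ≠ 0) (hh0 : 1 - rh ≠ 0)
    (hden : rh - 1 + a * (rl - rh) ≠ 0)
    (hS : (a * rl - 1) / (rl - 1) + a * rh * (1 - rh)⁻¹ ≠ 0) :
    ((T * (a * rl ^ 2) - (T + 1) * (a * rl) + rl) / (rl - 1) ^ 2
        + a * rh * (rh / (1 - rh) ^ 2) + (T + 1) * (a * rh) * (1 - rh)⁻¹)
      / ((a * rl - 1) / (rl - 1) + a * rh * (1 - rh)⁻¹)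
      = T + rl / (1 - rl) + 1 / (1 - rh) + (1 + T - T * rh) / (rh - 1 + a * (rl - rh)) := by
  have hl0' : 1 - rl ≠ 0 := fun h => hl0 (by linarith)
  rw [div_eq_iff hS]
  field_simp
  ring

/-- The threshold birth-death chain with `ρ_low > 1 > ρ_high` is positive recurrent
(its stationary weights are summable with summable mean) and the stationary mean number
in system equals
`t + ρ_low/(1-ρ_low) + 1/(1-ρ_high) + (1 + t - t ρ_high)/(ρ_high - 1 + ρ_low^t (ρ_low - ρ_high))`. -/
theorem stmt10 (Λ μlow μhigh : ℝ) (t : ℕ)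
    (hΛ : 0 < Λ) (hml : 0 < μlow) (hmh : 0 < μhigh)
    (ρlow ρhigh : ℝ) (hρl : ρlow = Λ / μlow) (hρh : ρhigh = Λ / μhigh)
    (hl : 1 < ρlow) (hh : ρhigh < 1) :
    Summable (threshWeight ρlow ρhigh t) ∧
    Summable (fun i : ℕ => (i : ℝ) * threshWeight ρlow ρhigh t i) ∧
    (∑' i : ℕ, (i : ℝ) * threshWeight ρlow ρhigh t i) / (∑' i, threshWeight ρlow ρhigh t i)
      = t + ρlow / (1 - ρlow) + 1 / (1 - ρhigh)
        + (1 + t - t * ρhigh) / (ρhigh - 1 + ρlow ^ t * (ρlow - ρhigh)) := by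
  have hρh0 : 0 < ρhigh := by rw [hρh]; positivity
  have hρl0 : 0 < ρlow := by rw [hρl]; positivity
  have hnorm : ‖ρhigh‖ < 1 := by rw [Real.norm_eq_abs, abs_of_pos hρh0]; exact hh
  have hshift : ∀ j : ℕ, threshWeight ρlow ρhigh t (j + (t + 1))
      = ρlow ^ t * ρhigh * ρhigh ^ j := by
    intro j
    unfold threshWeight
    rw [if_neg (by omega)]
    have h : j + (t + 1) - t = j + 1 := by omega
    rw [h, pow_succ]
    ring
  -- summability of the weights
  have hgeo : Summable (fun j : ℕ => ρhigh ^ j) :=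
    summable_geometric_of_lt_one hρh0.le hh
  have hjgeo : Summable (fun j : ℕ => (j : ℝ) * ρhigh ^ j) := by
    have := summable_pow_mul_geometric_of_norm_lt_one 1 hnorm (R := ℝ)
    simpa using this
  have hS : Summable (threshWeight ρlow ρhigh t) := by
    refine (summable_nat_add_iff (t + 1)).mp ?_
    exact (hgeo.mul_left (ρlow ^ t * ρhigh)).congr (fun j => (hshift j).symm)
  have hM : Summable (fun i : ℕ => (i : ℝ) * threshWeight ρlow ρhigh t i) := by
    refine (summable_nat_add_iff (t + 1)).mp ?_
    have : Summable (fun j : ℕ =>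
        ρlow ^ t * ρhigh * ((j : ℝ) * ρhigh ^ j) + (((t : ℝ) + 1) * (ρlow ^ t * ρhigh)) * ρhigh ^ j) :=
      (hjgeo.mul_left _).add (hgeo.mul_left _)
    refine this.congr (fun j => ?_)
    rw [hshift j]
    push_cast
    ring
  refine ⟨hS, hM, ?_⟩
  -- closed forms for the two tsums
  have hl1 : ρlow ≠ 1 := ne_of_gt hl
  have hl0 : ρlow - 1 ≠ 0 := sub_ne_zero.mpr hl1
  have hh0 : 1 - ρhigh ≠ 0 := ne_of_gt (by linarith)
  have htg : ∑' j : ℕ, ρhigh ^ j = (1 - ρhigh)⁻¹ := tsum_geometric_of_lt_one hρh0.le hh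
  have htjg : ∑' j : ℕ, (j : ℝ) * ρhigh ^ j = ρhigh / (1 - ρhigh) ^ 2 :=
    tsum_coe_mul_geometric_of_norm_lt_one hnorm
  have hSsum : ∑' i, threshWeight ρlow ρhigh t i
      = (ρlow ^ (t + 1) - 1) / (ρlow - 1) + ρlow ^ t * ρhigh * (1 - ρhigh)⁻¹ := by
    rw [← Summable.sum_add_tsum_nat_add (t + 1) hS]
    have h1 : ∑ i ∈ Finset.range (t + 1), threshWeight ρlow ρhigh t i
        = (ρlow ^ (t + 1) - 1) / (ρlow - 1) := by
      rw [← geom_sum_eq hl1]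
      refine Finset.sum_congr rfl (fun i hi => ?_)
      unfold threshWeight
      rw [if_pos (by simp at hi; omega)]
    have h2 : ∑' j : ℕ, threshWeight ρlow ρhigh t (j + (t + 1))
        = ρlow ^ t * ρhigh * (1 - ρhigh)⁻¹ := by
      rw [tsum_congr hshift, tsum_mul_left, htg]
    rw [h1, h2]
  have hMsum : ∑' i : ℕ, (i : ℝ) * threshWeight ρlow ρhigh t i
      = ((t : ℝ) * ρlow ^ (t + 2) - ((t : ℝ) + 1) * ρlow ^ (t + 1) + ρlow) / (ρlow - 1) ^ 2
        + ρlow ^ t * ρhigh * (ρhigh / (1 - ρhigh) ^ 2)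
        + ((t : ℝ) + 1) * (ρlow ^ t * ρhigh) * (1 - ρhigh)⁻¹ := by
    rw [← Summable.sum_add_tsum_nat_add (t + 1) hM]
    have h1 : ∑ i ∈ Finset.range (t + 1), (i : ℝ) * threshWeight ρlow ρhigh t i
        = ((t : ℝ) * ρlow ^ (t + 2) - ((t : ℝ) + 1) * ρlow ^ (t + 1) + ρlow) / (ρlow - 1) ^ 2 := by
      rw [← sum_i_pow ρlow hl1]
      refine Finset.sum_congr rfl (fun i hi => ?_)
      unfold threshWeight
      rw [if_pos (by simp at hi; omega)]
    have h2 : ∑' j : ℕ, ((j + (t + 1) : ℕ) : ℝ) * threshWeight ρlow ρhigh t (j + (t + 1))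
        = ρlow ^ t * ρhigh * (ρhigh / (1 - ρhigh) ^ 2)
          + ((t : ℝ) + 1) * (ρlow ^ t * ρhigh) * (1 - ρhigh)⁻¹ := by
      have heq : ∀ j : ℕ, ((j + (t + 1) : ℕ) : ℝ) * threshWeight ρlow ρhigh t (j + (t + 1))
          = ρlow ^ t * ρhigh * ((j : ℝ) * ρhigh ^ j)
            + (((t : ℝ) + 1) * (ρlow ^ t * ρhigh)) * ρhigh ^ j := by
        intro j; rw [hshift j]; push_cast; ring
      rw [tsum_congr heq, Summable.tsum_add (hjgeo.mul_left _) (hgeo.mul_left _),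
        tsum_mul_left, tsum_mul_left, htjg, htg]
    rw [h1, h2]
    ring
  -- nonvanishing of the normalizer and of the final denominator
  have hpow1 : (1 : ℝ) ≤ ρlow ^ t := one_le_pow₀ hl.le
  have hden : ρhigh - 1 + ρlow ^ t * (ρlow - ρhigh) ≠ 0 := by
    have h1 : ρlow - ρhigh > 0 := by linarith
    have : ρlow - ρhigh ≤ ρlow ^ t * (ρlow - ρhigh) := le_mul_of_one_le_left h1.le hpow1
    nlinarith
  have hSpos : 0 < ∑' i, threshWeight ρlow ρhigh t i := by
    rw [hSsum]
    have h1 : 0 < (ρlow ^ (t + 1) - 1) / (ρlow - 1) := by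
      apply div_pos _ (by linarith)
      have : (1 : ℝ) < ρlow ^ (t + 1) := one_lt_pow₀ hl (by omega)
      linarith
    have h2 : 0 < ρlow ^ t * ρhigh * (1 - ρhigh)⁻¹ := by
      apply mul_pos (mul_pos (pow_pos hρl0 t) hρh0)
      exact inv_pos.mpr (by linarith)
    linarith
  rw [hMsum, hSsum] at *
  have hp2 : ρlow ^ (t + 2) = ρlow ^ t * ρlow ^ 2 := by ring
  have hp1 : ρlow ^ (t + 1) = ρlow ^ t * ρlow := by ring
  rw [hp2, hp1] at *
  exact key_identity ρlow ρhigh (ρlow ^ t) (t : ℝ) hl0 hh0 hden (ne_of_gt hSpos)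
end

section
/- In a birth-death chain with arrival rate Λ in every state and departure rate μ_i from state i where μ_i ≤ ν_i for all i ≥ 1 (ν_i being the departure rates of a second chain with the same arrival rates), if both chains are positive recurrent then the stationary mean number of jobs in the first chain is at least the stationary mean in the second chain: E[N]^μ ≥ E[N]^ν. -/
/-!
The stationary weights `w_i = ∏_{j=1}^i Λ / r_j` of the two chains satisfy
`w^μ_i w^ν_j ≤ w^μ_j w^ν_i` for `i ≤ j`, since `w^μ_j / w^μ_i = ∏_{i<k≤j} Λ / μ_k` dominates the
corresponding product for `ν`: the likelihood ratio `w^μ / w^ν` is nondecreasing. For such weights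
and any nondecreasing `f`, `(∑ f_i w^ν_i)(∑ w^μ_j) ≤ (∑ f_i w^μ_i)(∑ w^ν_j)`, because after
symmetrizing the double sum in `(i, j)` each pair contributes
`(f_j - f_i)(w^μ_j w^ν_i - w^μ_i w^ν_j) ≥ 0`. Taking `f_i = i` and dividing gives the claim.
-/

open scoped ENNReal
open Finset

theorem ENNReal.mul_add_mul_le_mul_add_mul {a b c d : ℝ≥0∞} (hab : a ≤ b) (hcd : c ≤ d) :
    a * d + b * c ≤ a * c + b * d := by
  obtain ⟨e, rfl⟩ := exists_add_of_le hab
  obtain ⟨g, rfl⟩ := exists_add_of_le hcd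
  calc a * (c + g) + (a + e) * c = a * c + (a + e) * c + a * g + 0 := by ring
    _ ≤ a * c + (a + e) * c + a * g + e * g := by gcongr; positivity
    _ = a * c + (a + e) * (c + g) := by ring

theorem ENNReal.div_le_div_of_mul_le_mul {x y A B : ℝ≥0∞} (h : x * A ≤ y * B)
    (hA : A ≠ 0) (hA' : A ≠ ⊤) : x / B ≤ y / A := by
  rw [ENNReal.le_div_iff_mul_le (Or.inl hA) (Or.inl hA')]
  calc x / B * A = x * A / B := by rw [div_eq_mul_inv, div_eq_mul_inv]; ring
    _ ≤ y * B / B := by gcongr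
    _ = y * (B / B) := by rw [mul_div_assoc]
    _ ≤ y := mul_le_of_le_one_right' ENNReal.div_self_le_one

theorem ENNReal.tsum_mul_tsum {ι : Type*} (u v : ι → ℝ≥0∞) :
    (∑' i, u i) * ∑' j, v j = ∑' p : ι × ι, u p.1 * v p.2 := by
  rw [ENNReal.tsum_prod', ← ENNReal.tsum_mul_right]
  exact tsum_congr fun i => ENNReal.tsum_mul_left.symm

theorem ENNReal.tsum_mul_mul_tsum_le_of_cross_le {ι : Type*} [LinearOrder ι]
    {f a b : ι → ℝ≥0∞} (hf : Monotone f) (hab : ∀ ⦃i j⦄, i ≤ j → a i * b j ≤ a j * b i) :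
    (∑' i, f i * b i) * ∑' j, a j ≤ (∑' i, f i * a i) * ∑' j, b j := by
  set F : ι × ι → ℝ≥0∞ := fun p => f p.1 * b p.1 * a p.2
  set G : ι × ι → ℝ≥0∞ := fun p => f p.1 * a p.1 * b p.2
  have hsymm : ∀ i j, i ≤ j → F (i, j) + F (j, i) ≤ G (i, j) + G (j, i) := fun i j hij => by
    simp only [F, G]
    calc f i * b i * a j + f j * b j * a i = f i * (a j * b i) + f j * (a i * b j) := by ring
      _ ≤ f i * (a i * b j) + f j * (a j * b i) :=
        ENNReal.mul_add_mul_le_mul_add_mul (hf hij) (hab hij)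
      _ = f i * a i * b j + f j * a j * b i := by ring
  have hpair : ∀ p : ι × ι, F p + F p.swap ≤ G p + G p.swap := by
    rintro ⟨i, j⟩
    rcases le_total i j with hij | hji
    · exact hsymm i j hij
    · simpa only [Prod.swap_prod_mk, add_comm] using hsymm j i hji
  have hswap (H : ι × ι → ℝ≥0∞) : ∑' p, (H p + H p.swap) = 2 * ∑' p, H p := by
    have : ∑' p : ι × ι, H p.swap = ∑' p, H p := (Equiv.prodComm ι ι).tsum_eq H
    rw [ENNReal.tsum_add, this, two_mul]
  rw [ENNReal.tsum_mul_tsum, ENNReal.tsum_mul_tsum]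
  refine (ENNReal.mul_le_mul_iff_right two_ne_zero ENNReal.ofNat_ne_top).mp ?_
  rw [← hswap F, ← hswap G]
  exact ENNReal.tsum_le_tsum hpair

/-- Unnormalized stationary distribution of the birth-death chain with birth rate `Λ` and death
rate `r i` from state `i`. -/
noncomputable def birthDeathWeight (Λ : ℝ≥0∞) (r : ℕ → ℝ≥0∞) (i : ℕ) : ℝ≥0∞ :=
  ∏ j ∈ range i, Λ / r (j + 1)

theorem birthDeathWeight_zero (Λ : ℝ≥0∞) (r : ℕ → ℝ≥0∞) : birthDeathWeight Λ r 0 = 1 :=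
  prod_range_zero _

theorem tsum_birthDeathWeight_ne_zero (Λ : ℝ≥0∞) (r : ℕ → ℝ≥0∞) :
    ∑' i, birthDeathWeight Λ r i ≠ 0 := fun h =>
  one_ne_zero ((birthDeathWeight_zero Λ r).symm.trans (ENNReal.tsum_eq_zero.1 h 0))

theorem birthDeathWeight_cross_le {Λ : ℝ≥0∞} {μ ν : ℕ → ℝ≥0∞} (hle : ∀ i, 1 ≤ i → μ i ≤ ν i)
    {i j : ℕ} (hij : i ≤ j) :
    birthDeathWeight Λ μ i * birthDeathWeight Λ ν j
      ≤ birthDeathWeight Λ μ j * birthDeathWeight Λ ν i := by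
  obtain ⟨d, rfl⟩ := Nat.exists_eq_add_of_le hij
  simp only [birthDeathWeight, prod_range_add]
  have hstep : ∏ k ∈ range d, Λ / ν (i + k + 1) ≤ ∏ k ∈ range d, Λ / μ (i + k + 1) :=
    prod_le_prod' fun k _ => ENNReal.div_le_div_left (hle _ (Nat.le_add_left 1 _)) Λ
  calc (∏ k ∈ range i, Λ / μ (k + 1)) * ((∏ k ∈ range i, Λ / ν (k + 1)) *
          ∏ k ∈ range d, Λ / ν (i + k + 1))
      ≤ (∏ k ∈ range i, Λ / μ (k + 1)) * ((∏ k ∈ range i, Λ / ν (k + 1)) *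
          ∏ k ∈ range d, Λ / μ (i + k + 1)) := by gcongr
    _ = _ := by ring

theorem stmt12_general (Λ : ℝ≥0∞)
    (μ ν : ℕ → ℝ≥0∞)
    (hle : ∀ i, 1 ≤ i → μ i ≤ ν i)
    (hrecμ : (∑' i, ∏ j ∈ Finset.range i, Λ / μ (j + 1)) < ⊤) :
    (∑' i : ℕ, (i : ℝ≥0∞) * ∏ j ∈ Finset.range i, Λ / ν (j + 1)) /
        (∑' i, ∏ j ∈ Finset.range i, Λ / ν (j + 1))
      ≤ (∑' i : ℕ, (i : ℝ≥0∞) * ∏ j ∈ Finset.range i, Λ / μ (j + 1)) /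
          (∑' i, ∏ j ∈ Finset.range i, Λ / μ (j + 1)) :=
  ENNReal.div_le_div_of_mul_le_mul
    (ENNReal.tsum_mul_mul_tsum_le_of_cross_le (f := Nat.cast) Nat.mono_cast
      fun _ _ => birthDeathWeight_cross_le (Λ := Λ) hle)
    (tsum_birthDeathWeight_ne_zero Λ μ) hrecμ.ne

/-- Comparing two positive recurrent birth-death chains with the same birth rate `Λ` and
death rates `μ i ≤ ν i`: the stationary mean number in system of the `μ`-chain is at least
that of the `ν`-chain.  The stationary weights are `∏_{j=1}^i Λ/r_j`. -/
theorem stmt12 (Λ : ℝ≥0∞) (hΛ0 : 0 < Λ) (hΛt : Λ ≠ ⊤)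
    (μ ν : ℕ → ℝ≥0∞)
    (hμpos : ∀ i, 1 ≤ i → 0 < μ i)
    (hle : ∀ i, 1 ≤ i → μ i ≤ ν i)
    (hrecμ : (∑' i, ∏ j ∈ Finset.range i, Λ / μ (j + 1)) < ⊤)
    (hrecν : (∑' i, ∏ j ∈ Finset.range i, Λ / ν (j + 1)) < ⊤) :
    (∑' i : ℕ, (i : ℝ≥0∞) * ∏ j ∈ Finset.range i, Λ / ν (j + 1)) /
        (∑' i, ∏ j ∈ Finset.range i, Λ / ν (j + 1))
      ≤ (∑' i : ℕ, (i : ℝ≥0∞) * ∏ j ∈ Finset.range i, Λ / μ (j + 1)) /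
          (∑' i, ∏ j ∈ Finset.range i, Λ / μ (j + 1)) :=
  stmt12_general Λ μ ν hle hrecμ
end

section
/- Under the assumptions of exponential job sizes and a single concave sublinear speedup function s, every scheduling policy's total departure rate in a state with i jobs is at most i·s(n/i)·μ, and EQUI achieves this bound; consequently (via the birth-death comparison) E[N]^EQUI ≤ E[N]^P for any policy P whose number-in-system process is the birth-death chain with arrival rate Λ and departure rates γ_i ≤ i·s(n/i)·μ. -/
open Finset

/-- Unnormalized stationary weights of a birth-death chain with birth rate `Λ` and
death rates `γ i` from state `i ≥ 1`. -/
noncomputable def bdWeight (Λ : ℝ) (γ : ℕ → ℝ) (i : ℕ) : ℝ :=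
  ∏ j ∈ Finset.range i, Λ / γ (j + 1)

lemma chebFin (N : ℕ) (w c : ℕ → ℝ) (hw : ∀ i, 0 ≤ w i) (hc : Antitone c) :
    (∑ i ∈ range N, (i : ℝ) * (c i * w i)) * (∑ i ∈ range N, w i)
      ≤ (∑ i ∈ range N, (i : ℝ) * w i) * (∑ i ∈ range N, c i * w i) := by
  have hD : 0 ≤ ∑ i ∈ range N, ∑ j ∈ range N,
      ((i : ℝ) - j) * (c j - c i) * (w i * w j) := by
    refine Finset.sum_nonneg fun i _ => Finset.sum_nonneg fun j _ => ?_
    have hww : 0 ≤ w i * w j := mul_nonneg (hw i) (hw j)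
    rcases le_total i j with h | h
    · have h1 : (i : ℝ) - j ≤ 0 := by
        have := (Nat.cast_le (α := ℝ)).mpr h; linarith
      have h2 : c j - c i ≤ 0 := by have := hc h; linarith
      exact mul_nonneg (mul_nonneg_of_nonpos_of_nonpos h1 h2) hww
    · have h1 : (0:ℝ) ≤ (i : ℝ) - j := by
        have := (Nat.cast_le (α := ℝ)).mpr h; linarith
      have h2 : (0:ℝ) ≤ c j - c i := by have := hc h; linarith
      exact mul_nonneg (mul_nonneg h1 h2) hww
  have expand : ∀ i j : ℕ, ((i : ℝ) - j) * (c j - c i) * (w i * w j)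
      = ((i:ℝ) * w i) * (c j * w j) - ((i:ℝ) * (c i * w i)) * (w j)
        - (w i) * ((j:ℝ) * (c j * w j)) + (c i * w i) * ((j:ℝ) * w j) := by
    intro i j; ring
  have key : (∑ i ∈ range N, ∑ j ∈ range N, ((i : ℝ) - j) * (c j - c i) * (w i * w j))
      = (∑ i ∈ range N, (i:ℝ) * w i) * (∑ i ∈ range N, c i * w i)
        - (∑ i ∈ range N, (i:ℝ) * (c i * w i)) * (∑ i ∈ range N, w i)
        - (∑ i ∈ range N, w i) * (∑ i ∈ range N, (i:ℝ) * (c i * w i))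
        + (∑ i ∈ range N, c i * w i) * (∑ i ∈ range N, (i:ℝ) * w i) := by
    simp_rw [expand, Finset.sum_add_distrib, Finset.sum_sub_distrib,
      ← Finset.mul_sum, ← Finset.sum_mul]
  rw [key] at hD
  linarith

lemma chebTsum (w c : ℕ → ℝ) (hw : ∀ i, 0 ≤ w i) (hc : Antitone c)
    (h1 : Summable w) (h2 : Summable (fun i => c i * w i))
    (h3 : Summable (fun i : ℕ => (i:ℝ) * w i))
    (h4 : Summable (fun i : ℕ => (i:ℝ) * (c i * w i))) :
    (∑' i : ℕ, (i:ℝ) * (c i * w i)) * (∑' i : ℕ, w i)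
      ≤ (∑' i : ℕ, (i:ℝ) * w i) * (∑' i : ℕ, c i * w i) := by
  have t1 := h1.hasSum.tendsto_sum_nat
  have t2 := h2.hasSum.tendsto_sum_nat
  have t3 := h3.hasSum.tendsto_sum_nat
  have t4 := h4.hasSum.tendsto_sum_nat
  exact le_of_tendsto_of_tendsto' (t4.mul t1) (t3.mul t2)
    (fun N => chebFin N w c hw hc)

/-- Any policy's total departure rate in a state with `i` jobs, obtained by running `j ≤ min(i,n)`
jobs on disjoint fractions `nθ₁,...,nθⱼ` of the cores, is at most `i s(n/i) μ`, which EQUI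
achieves; consequently the stationary mean number of jobs under EQUI is at most that under
any policy `P` whose number-in-system is a birth-death chain with rates `γP i ≤ i s(n/i) μ`. -/
theorem stmt13 (n : ℝ) (hn : 0 < n) (μ Λ : ℝ) (hμ : 0 < μ) (hΛ : 0 < Λ)
    (s : ℝ → ℝ) (hconc : ConcaveOn ℝ (Set.Ici (0:ℝ)) s)
    (hmono : MonotoneOn s (Set.Ici (0:ℝ)))
    (hlow : ∀ k : ℝ, 0 ≤ k → k ≤ 1 → s k = k)
    (γP : ℕ → ℝ) (hγpos : ∀ i : ℕ, 1 ≤ i → 0 < γP i)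
    (hγle : ∀ i : ℕ, 1 ≤ i → γP i ≤ (i : ℝ) * s (n / i) * μ)
    (hrecP : Summable (bdWeight Λ γP))
    (hrecE : Summable (bdWeight Λ (fun i => (i : ℝ) * s (n / i) * μ)))
    (hmeanP : Summable (fun i : ℕ => (i : ℝ) * bdWeight Λ γP i))
    (hmeanE : Summable (fun i : ℕ => (i : ℝ) * bdWeight Λ (fun i => (i : ℝ) * s (n / i) * μ) i)) :
    (∀ i : ℕ, 1 ≤ i → ∀ j : ℕ, 0 < j → (j : ℝ) ≤ min (i : ℝ) n →
      ∀ θ : Fin j → ℝ, (∀ k, 0 < θ k) → ∑ k, θ k = 1 →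
        μ * ∑ k, s (n * θ k) ≤ (i : ℝ) * s (n / i) * μ) ∧
    (∑' i : ℕ, (i : ℝ) * bdWeight Λ (fun i => (i : ℝ) * s (n / i) * μ) i) /
        (∑' i, bdWeight Λ (fun i => (i : ℝ) * s (n / i) * μ) i)
      ≤ (∑' i : ℕ, (i : ℝ) * bdWeight Λ γP i) / (∑' i, bdWeight Λ γP i) := by
  have hs0 : s 0 = 0 := hlow 0 le_rfl zero_le_one
  -- concavity slope fact:  for 0 < a ≤ b,  a * s b ≤ b * s a
  have slope : ∀ a b : ℝ, 0 < a → a ≤ b → a * s b ≤ b * s a := by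
    intro a b ha hab
    have hb : 0 < b := lt_of_lt_of_le ha hab
    have hw1 : (0:ℝ) ≤ a / b := le_of_lt (div_pos ha hb)
    have hw2 : (0:ℝ) ≤ 1 - a / b := by
      have : a / b ≤ 1 := (div_le_one hb).mpr hab
      linarith
    have hj := hconc.2 (Set.mem_Ici.mpr hb.le) (Set.mem_Ici.mpr le_rfl)
      hw1 hw2 (by ring)
    simp only [smul_eq_mul, hs0, mul_zero, add_zero] at hj
    have harg : a / b * b = a := by field_simp
    rw [harg] at hj
    -- hj : a / b * s b ≤ s a
    have h2 := mul_le_mul_of_nonneg_left hj hb.le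
    calc a * s b = b * (a / b * s b) := by field_simp
      _ ≤ b * s a := h2
  constructor
  · intro i hi j hj hjmin θ hθpos hθsum
    have hi' : (0:ℝ) < i := by exact_mod_cast hi
    have hj' : (0:ℝ) < j := by exact_mod_cast hj
    have hji : (j:ℝ) ≤ i := le_trans hjmin (min_le_left _ _)
    -- Jensen:  ∑ s(nθ) ≤ j * s(n/j)
    have hjen : (∑ k, (1/(j:ℝ)) • s (n * θ k)) ≤ s (∑ k : Fin j, (1/(j:ℝ)) • (n * θ k)) := by
      refine hconc.le_map_sum (fun k _ => by positivity) ?_ (fun k _ => ?_)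
      · simp only [Finset.sum_const, Finset.card_univ, Fintype.card_fin, nsmul_eq_mul]
        field_simp
      · exact Set.mem_Ici.mpr (le_of_lt (mul_pos hn (hθpos k)))
    have harg : (∑ k : Fin j, (1/(j:ℝ)) • (n * θ k)) = n / j := by
      simp only [smul_eq_mul, ← Finset.mul_sum, ← mul_assoc, mul_comm (1/(j:ℝ)) n]
      rw [hθsum, mul_one, mul_one_div]
    rw [harg] at hjen
    have hsum_eq : (∑ k, (1/(j:ℝ)) • s (n * θ k)) = (1/(j:ℝ)) * ∑ k, s (n * θ k) := by
      simp [smul_eq_mul, Finset.mul_sum]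
    rw [hsum_eq] at hjen
    have h1 : (∑ k, s (n * θ k)) ≤ (j:ℝ) * s (n / j) := by
      have h := mul_le_mul_of_nonneg_left hjen hj'.le
      calc (∑ k, s (n * θ k)) = (j:ℝ) * ((1/(j:ℝ)) * ∑ k, s (n * θ k)) := by
            field_simp
        _ ≤ (j:ℝ) * s (n / j) := h
    have h2 : (j:ℝ) * s (n / j) ≤ (i:ℝ) * s (n / i) := by
      have h := slope (n / i) (n / j) (div_pos hn hi') (by gcongr)
      rw [div_mul_eq_mul_div, div_mul_eq_mul_div, div_le_div_iff₀ hi' hj'] at h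
      have h' : n * ((j:ℝ) * s (n / j)) ≤ n * ((i:ℝ) * s (n / i)) := by nlinarith
      exact le_of_mul_le_mul_left h' hn
    calc μ * ∑ k, s (n * θ k) ≤ μ * ((i:ℝ) * s (n / i)) :=
          mul_le_mul_of_nonneg_left (h1.trans h2) hμ.le
      _ = (i:ℝ) * s (n / i) * μ := by ring
  · set γE : ℕ → ℝ := fun i => (i:ℝ) * s (n / i) * μ with hγEdef
    set wP : ℕ → ℝ := bdWeight Λ γP with hwPdef
    have hγEpos : ∀ i, 1 ≤ i → 0 < γE i := fun i hi => lt_of_lt_of_le (hγpos i hi) (hγle i hi)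
    set c : ℕ → ℝ := fun i => ∏ j ∈ range i, γP (j+1) / γE (j+1) with hcdef
    have hcnonneg : ∀ i, 0 ≤ c i := fun i => Finset.prod_nonneg fun j _ =>
      div_nonneg (hγpos _ (by omega)).le (hγEpos _ (by omega)).le
    have hcanti : Antitone c := antitone_nat_of_succ_le fun i => by
      have hr : γP (i+1) / γE (i+1) ≤ 1 :=
        (div_le_one (hγEpos _ (by omega))).mpr (hγle _ (by omega))
      calc c (i+1) = c i * (γP (i+1) / γE (i+1)) := Finset.prod_range_succ _ _
        _ ≤ c i * 1 := mul_le_mul_of_nonneg_left hr (hcnonneg i)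
        _ = c i := mul_one _
    have hEeq : ∀ i, bdWeight Λ γE i = c i * wP i := by
      intro i
      simp only [hcdef, hwPdef, bdWeight, ← Finset.prod_mul_distrib]
      refine Finset.prod_congr rfl fun j _ => ?_
      have hP := hγpos (j+1) (by omega)
      have hE := hγEpos (j+1) (by omega)
      field_simp
    have hfun : bdWeight Λ γE = fun i => c i * wP i := funext hEeq
    have hwPnn : ∀ i, 0 ≤ wP i := fun i => Finset.prod_nonneg fun j _ =>
      div_nonneg hΛ.le (hγpos _ (by omega)).le
    have h2 : Summable (fun i => c i * wP i) := hfun ▸ hrecE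
    have h4 : Summable (fun i : ℕ => (i:ℝ) * (c i * wP i)) := by
      have : (fun i : ℕ => (i:ℝ) * (c i * wP i))
          = fun i : ℕ => (i:ℝ) * bdWeight Λ γE i := by
        funext i; rw [hEeq]
      rw [this]; exact hmeanE
    have hPpos : 0 < ∑' i, wP i := by
      have h := Summable.le_tsum hrecP 0 (fun j _ => hwPnn j)
      have h0 : wP 0 = 1 := by simp [hwPdef, bdWeight]
      rw [h0] at h; linarith
    have hEpos : 0 < ∑' i, c i * wP i := by
      have h := Summable.le_tsum h2 0 (fun j _ => mul_nonneg (hcnonneg j) (hwPnn j))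
      have h0 : c 0 * wP 0 = 1 := by simp [hcdef, hwPdef, bdWeight]
      rw [h0] at h; linarith
    simp only [hfun]
    rw [div_le_div_iff₀ hEpos hPpos]
    exact chebTsum wP c hwPnn hcanti hrecP h2 hmeanP h4
end
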